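/- There exists a decision-making mechanism with imperfect information that is epistemic-gap-free but is not an elected epistemic dictatorship. (For instance, the three-agent mechanism M of the paper: agent A at the root chooses between subtree u_2 and subtree u_3; in u_3 agent C alone decides Yes or No; in u_2 agent B has actions 0,1,2 where action 1 yields Yes immediately, action 0 leads to a node u_5 where B decides Yes/No, and action 2 leads to a node u_6 where B decides Yes/No, but B cannot distinguish u_2 from a node u_4 reached differently where action 0 yields No.) -/

import Mathlib

inductive Outcome where
  | yes : Outcome
  | no : Outcome
deriving DecidableEq

def Outcome.flip : Outcome → Outcome
  | .yes => .no
  | .no => .yes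

/-- A decision-making mechanism (perfect information):
a finite rooted directed tree `(V, E)` with root `root`,
agents `A`, actions `Act`, available-action sets `Δ`,
choice functions `τ`, and a leaf labelling `lab`. -/
structure Mech (V A Act : Type) where
  finV : Fintype V
  E : V → V → Prop
  root : V
  root_no_parent : ∀ v, ¬ E v root
  unique_parent : ∀ u v w, E u w → E v w → u = v
  reach : ∀ v, Relation.ReflTransGen E root v
  Δ : A → V → Set Act
  Δ_nonempty : ∀ a v, (∃ u, E v u) → (Δ a v).Nonempty
  τ : V → (A → Act) → V
  τ_child : ∀ v δ, (∃ u, E v u) → (∀ b, δ b ∈ Δ b v) → E v (τ v δ)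
  lab : V → Outcome

namespace Mech

variable {V A Act : Type}

def IsLeaf (M : Mech V A Act) (v : V) : Prop := ∀ u, ¬ M.E v u

def IsDecision (M : Mech V A Act) (v : V) : Prop := ∃ u, M.E v u

/-- `Next a d v` : the set of children the process can move to from `v`
when agent `a` chooses action `d`. -/
def Next (M : Mech V A Act) (a : A) (d : Act) (v : V) : Set V :=
  { u | ∃ δ : A → Act, (∀ b, δ b ∈ M.Δ b v) ∧ δ a = d ∧ u = M.τ v δ }

/-- `win_a(o)`: the smallest set containing all leaves labelled `o` and
closed under: if `Next a d v ⊆ win_a(o)` for some available action `d`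
at a decision node `v`, then `v ∈ win_a(o)`. -/
inductive Win (M : Mech V A Act) (a : A) (o : Outcome) : V → Prop where
  | leaf (v : V) : M.IsLeaf v → M.lab v = o → Win M a o v
  | step (v : V) (d : Act) : M.IsDecision v → d ∈ M.Δ a v →
      (∀ u ∈ M.Next a d v, Win M a o u) → Win M a o v

/-- A decision path starting at the root. -/
def RootPath (M : Mech V A Act) (l : List V) : Prop :=
  l.head? = some M.root ∧ l.Chain' M.E

/-- Agent `a` is (counterfactually) responsible at leaf `v`. -/
def Responsible (M : Mech V A Act) (a : A) (v : V) : Prop :=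
  ∃ l : List V, M.RootPath l ∧ l.getLast? = some v ∧
    ∃ u ∈ l, M.IsDecision u ∧ M.Win a (M.lab v).flip u

def GapFree (M : Mech V A Act) : Prop :=
  ∀ v, M.IsLeaf v → ∃ a, M.Responsible a v

def Dictator (M : Mech V A Act) (a : A) (v : V) : Prop :=
  M.Win a Outcome.yes v ∧ M.Win a Outcome.no v

def ElectedDictatorship (M : Mech V A Act) : Prop :=
  ∀ (l : List V) (v : V), M.RootPath l → l.getLast? = some v → M.IsLeaf v →
    ∃ u ∈ l, ∃ a, M.Dictator a u

end Mech

/-- A decision-making mechanism with imperfect information. -/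
structure IMech (V A Act : Type) extends Mech V A Act where
  sim : A → V → V → Prop
  sim_equiv : ∀ a, Equivalence (sim a)
  sim_decision : ∀ a u v, sim a u v → ((∃ w, E u w) ↔ (∃ w, E v w))
  sim_Δ : ∀ a u v, sim a u v → Δ a u = Δ a v

namespace IMech

variable {V A Act : Type}

/-- `Next a d ([v]_a)` : the union of `Next a d u` over all `u ∼_a v`. -/
def NextCl (M : IMech V A Act) (a : A) (d : Act) (v : V) : Set V :=
  { w | ∃ u, M.sim a v u ∧ w ∈ M.toMech.Next a d u }

/-- `ewin_a(o)`. -/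
inductive EWin (M : IMech V A Act) (a : A) (o : Outcome) : V → Prop where
  | leaf (v : V) : M.toMech.IsLeaf v → M.lab v = o → EWin M a o v
  | known (v : V) (d : Act) : M.toMech.IsDecision v → d ∈ M.Δ a v →
      (∀ w ∈ M.NextCl a d v, EWin M a o w) → EWin M a o v
  | blind (v : V) : M.toMech.IsDecision v →
      (∀ d ∈ M.Δ a v, ∀ w ∈ M.toMech.Next a d v, EWin M a o w) → EWin M a o v

/-- `uwin_a(o)`. -/
inductive UWin (M : IMech V A Act) (a : A) (o : Outcome) : V → Prop where
  | leaf (v : V) : M.toMech.IsLeaf v → M.lab v = o → UWin M a o v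
  | known (v : V) (d : Act) : M.toMech.IsDecision v → d ∈ M.Δ a v →
      (∀ w ∈ M.NextCl a d v, UWin M a o w) → UWin M a o v

def EpistemicallyResponsible (M : IMech V A Act) (a : A) (v : V) : Prop :=
  ∃ l : List V, M.toMech.RootPath l ∧ l.getLast? = some v ∧
    ∃ u ∈ l, M.toMech.IsDecision u ∧ M.EWin a (M.lab v).flip u

def EpistemicGapFree (M : IMech V A Act) : Prop :=
  ∀ v, M.toMech.IsLeaf v → ∃ a, M.EpistemicallyResponsible a v

def EpistemicDictator (M : IMech V A Act) (a : A) (v : V) : Prop :=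
  M.EWin a Outcome.yes v ∧ M.EWin a Outcome.no v

def ElectedEpistemicDictatorship (M : IMech V A Act) : Prop :=
  ∀ (l : List V) (v : V), M.toMech.RootPath l → l.getLast? = some v →
    M.toMech.IsLeaf v → ∃ u ∈ l, ∃ a, M.EpistemicDictator a u

def SemiEpistemicDictator (M : IMech V A Act) (a : A) (v : V) : Prop :=
  ∃ o : Outcome, M.EWin a o v ∧ M.toMech.Win a o.flip v

def ElectedSemiEpistemicDictatorship (M : IMech V A Act) : Prop :=
  ∀ (l : List V) (v : V), M.toMech.RootPath l → l.getLast? = some v →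
    M.toMech.IsLeaf v → ∃ u ∈ l, ∃ a, M.SemiEpistemicDictator a u

end IMech

/-!
Counterexample with two agents. At the root `a` sends play to `u2` or `u3`. At `u2` agent `b`
chooses among `u5` (where `b` then decides), the leaf `y2 = Yes`, and `u6` (where `a` decides);
at `u3` agent `b` chooses between the leaf `y3 = Yes` and `u4`, whose only outcome is `n4 = No`.
Agent `b` cannot tell `u2` from `u4`.

The mechanism is epistemically gap-free: below `u5`, `u6`, `u3` the deciding agent is responsible,
and for `y2` agent `b` is, since the action leading to `u5` at `u2` leads to `n4` at `u4`, so it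
secures No throughout `b`'s information set. Yet on the path `root, u2, y2` there is no
epistemic dictator. Agent `b` secures No but not Yes at `root` and `u2`: the action that reaches
`y2` from `u2` reaches `n4` from `u4`, and acting blindly at `u2` leaves `a` in control at `u6`.
Since two distinct agents never secure opposite outcomes at the same node, nobody else can be a
dictator there either.
-/

namespace Mech

variable {V A Act : Type} {M : Mech V A Act}

theorem exists_rootPath_mem {u v : V} (h : Relation.ReflTransGen M.E u v) :
    ∃ l, M.RootPath l ∧ l.getLast? = some v ∧ u ∈ l := by
  induction h with
  | refl =>
    obtain ⟨l, hchain, hlast⟩ := List.exists_isChain_cons_of_relationReflTransGen (M.reach u)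
    refine ⟨M.root :: l, ⟨rfl, hchain⟩, ?_, hlast ▸ List.getLast_mem _⟩
    rw [List.getLast?_eq_some_getLast (List.cons_ne_nil _ _), hlast]
  | @tail w x _ hwx ih =>
    obtain ⟨l, ⟨hhead, hchain⟩, hlast, hu⟩ := ih
    have hl : l ≠ [] := by rintro rfl; simp at hhead
    refine ⟨l ++ [x], ⟨?_, hchain.append (.singleton x) ?_⟩, by simp, List.mem_append_left _ hu⟩
    · rwa [List.head?_append_of_ne_nil _ hl]
    · simpa [hlast] using hwx

theorem next_inter_next_nonempty {a b : A} (hab : a ≠ b) {v : V} (hv : M.IsDecision v)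
    {d d' : Act} (hd : d ∈ M.Δ a v) (hd' : d' ∈ M.Δ b v) :
    (M.Next a d v ∩ M.Next b d' v).Nonempty := by
  classical
  let δ : A → Act := fun c =>
    if c = a then d else if c = b then d' else (M.Δ_nonempty c v hv).some
  have hδ : ∀ c, δ c ∈ M.Δ c v := fun c => by
    by_cases hca : c = a
    · simpa [δ, hca] using hd
    by_cases hcb : c = b
    · subst hcb
      simpa [δ, hca] using hd'
    simpa [δ, hca, hcb] using (M.Δ_nonempty c v hv).some_mem
  exact ⟨M.τ v δ, ⟨δ, hδ, by simp [δ], rfl⟩, ⟨δ, hδ, by simp [δ, hab.symm], rfl⟩⟩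

end Mech

namespace IMech

variable {V A Act : Type} {M : IMech V A Act} {a b : A} {o o' : Outcome} {u v : V} {d : Act}

theorem next_subset_nextCl : M.Next a d v ⊆ M.NextCl a d v :=
  fun _ hw => ⟨v, (M.sim_equiv a).refl v, hw⟩

theorem ewin_of_forall_child (hv : M.IsDecision v) (h : ∀ w, M.E v w → M.EWin a o w) :
    M.EWin a o v :=
  .blind v hv fun _ _ _ ⟨δ, hδ, _, hw⟩ => hw ▸ h _ (M.τ_child v δ hv hδ)

theorem ewin_of_next (hv : M.IsDecision v) (hd : d ∈ M.Δ a v) (hcl : ∀ u, M.sim a v u → u = v)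
    (h : ∀ w ∈ M.Next a d v, M.EWin a o w) : M.EWin a o v :=
  .known v d hv hd fun w ⟨u, hu, hw⟩ => h w (hcl u hu ▸ hw)

theorem not_ewin_of_isLeaf (hv : M.IsLeaf v) (ho : M.lab v ≠ o) : ¬ M.EWin a o v := by
  rintro (⟨_, _, hlab⟩ | ⟨_, _, ⟨w, hw⟩, -, -⟩ | ⟨_, ⟨w, hw⟩, -⟩)
  · exact ho hlab
  all_goals exact hv w hw

theorem EWin.exists_forall_next (h : M.EWin a o v) (hv : M.IsDecision v) :
    ∃ d ∈ M.Δ a v, ∀ w ∈ M.Next a d v, M.EWin a o w := by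
  cases h with
  | leaf _ hl _ => obtain ⟨w, hw⟩ := hv; exact (hl w hw).elim
  | known _ d _ hd hall => exact ⟨d, hd, fun w hw => hall w (next_subset_nextCl hw)⟩
  | blind _ _ hall =>
    obtain ⟨d, hd⟩ := M.Δ_nonempty a v hv
    exact ⟨d, hd, hall d hd⟩

/-- Playing both agents' strategies at once would reach a leaf carrying both labels. -/
theorem eq_of_ewin_of_ewin (hab : a ≠ b) (ha : M.EWin a o v) (hb : M.EWin b o' v) : o = o' := by
  induction ha with
  | leaf v hl hlab =>
    cases hb with
    | leaf _ _ hlab' => exact hlab.symm.trans hlab'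
    | known _ _ hv _ _ | blind _ hv _ => obtain ⟨w, hw⟩ := hv; exact (hl w hw).elim
  | known v d hv hd _ ih =>
    obtain ⟨d', hd', hb'⟩ := hb.exists_forall_next hv
    obtain ⟨w, hwa, hwb⟩ := M.next_inter_next_nonempty hab hv hd hd'
    exact ih w (next_subset_nextCl hwa) (hb' w hwb)
  | blind v hv _ ih =>
    obtain ⟨d, hd⟩ := M.Δ_nonempty a v hv
    obtain ⟨d', hd', hb'⟩ := hb.exists_forall_next hv
    obtain ⟨w, hwa, hwb⟩ := M.next_inter_next_nonempty hab hv hd hd'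
    exact ih d hd w hwa (hb' w hwb)

theorem not_ewin_of_forall_exists (hv : M.IsDecision v)
    (hknown : ∀ d ∈ M.Δ a v, ∃ w ∈ M.NextCl a d v, ¬ M.EWin a o w)
    (hblind : ∃ d ∈ M.Δ a v, ∃ w ∈ M.Next a d v, ¬ M.EWin a o w) : ¬ M.EWin a o v := by
  intro h
  cases h with
  | leaf _ hl _ => obtain ⟨w, hw⟩ := hv; exact hl w hw
  | known _ d _ hd hall =>
    obtain ⟨w, hw, hnw⟩ := hknown d hd
    exact hnw (hall w hw)
  | blind _ _ hall =>
    obtain ⟨d, hd, w, hw, hnw⟩ := hblind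
    exact hnw (hall d hd w hw)

theorem not_ewin_of_forall_exists_next (hv : M.IsDecision v)
    (h : ∀ d ∈ M.Δ a v, ∃ w ∈ M.Next a d v, ¬ M.EWin a o w) : ¬ M.EWin a o v :=
  have ⟨d, hd⟩ := M.Δ_nonempty a v hv
  not_ewin_of_forall_exists hv
    (fun d hd => (h d hd).imp fun _ => And.imp_left fun hw => next_subset_nextCl hw)
    ⟨d, hd, h d hd⟩

theorem not_epistemicDictator (hb : M.EWin b o v) (hb' : ¬ M.EWin b o.flip v) (a : A) :
    ¬ M.EpistemicDictator a v := by
  have hflip : ∀ {c}, M.EpistemicDictator c v → M.EWin c o.flip v := by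
    cases o
    exacts [And.right, And.left]
  intro ha
  by_cases hab : a = b
  · exact hb' (hab ▸ hflip ha)
  · cases o <;> cases eq_of_ewin_of_ewin hab (hflip ha) hb

theorem epistemicallyResponsible_of_transGen (huv : Relation.TransGen M.E u v)
    (hu : M.EWin a (M.lab v).flip u) : M.EpistemicallyResponsible a v := by
  obtain ⟨l, hl, hlast, hul⟩ := M.exists_rootPath_mem huv.to_reflTransGen
  obtain ⟨w, huw, -⟩ := Relation.TransGen.head'_iff.mp huv
  exact ⟨l, hl, hlast, u, hul, ⟨w, huw⟩, hu⟩

end IMech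

namespace Counterexample

inductive Agent | a | b
  deriving DecidableEq

instance : Fintype Agent := .ofList [.a, .b] (by rintro ⟨⟩ <;> decide)

inductive Node
  | root | u2 | u3 | u4 | u5 | u6 | y2 | y3 | n4 | y5 | n5 | y6 | n6
  deriving DecidableEq

instance : Fintype Node :=
  .ofList [.root, .u2, .u3, .u4, .u5, .u6, .y2, .y3, .n4, .y5, .n5, .y6, .n6]
    (by rintro ⟨⟩ <;> decide)

def parent : Node → Option Node
  | .root => none
  | .u2 | .u3 => some .root
  | .u5 | .y2 | .u6 => some .u2
  | .y3 | .u4 => some .u3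
  | .n4 => some .u4
  | .y5 | .n5 => some .u5
  | .y6 | .n6 => some .u6

def depth : Node → ℕ
  | .root => 0
  | .u2 | .u3 => 1
  | .u5 | .y2 | .u6 | .y3 | .u4 => 2
  | .n4 | .y5 | .n5 | .y6 | .n6 => 3

def Edge (v w : Node) : Prop := parent w = some v

theorem depth_lt_of_parent_eq_some : ∀ {u v : Node}, parent v = some u → depth u < depth v := by
  decide

theorem eq_root_of_parent_eq_none : ∀ {v : Node}, parent v = none → v = .root := by
  decide

theorem reachable (v : Node) : Relation.ReflTransGen Edge .root v :=
  match hv : parent v with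
  | none => eq_root_of_parent_eq_none hv ▸ .refl
  | some u => (reachable u).tail hv
termination_by depth v
decreasing_by exact depth_lt_of_parent_eq_some hv

def move : Node → (Agent → Fin 3) → Node
  | .root, δ => if δ .a = 0 then .u2 else .u3
  | .u2, δ => if δ .b = 0 then .u5 else if δ .b = 1 then .y2 else .u6
  | .u3, δ => if δ .b = 0 then .y3 else .u4
  | .u4, _ => .n4
  | .u5, δ => if δ .b = 0 then .y5 else .n5
  | .u6, δ => if δ .a = 0 then .y6 else .n6
  | v, _ => v

theorem parent_move : ∀ v δ, (∃ u, parent u = some v) → parent (move v δ) = some v := by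
  decide

def label : Node → Outcome
  | .y2 | .y3 | .y5 | .y6 => .yes
  | _ => .no

def view : Agent → Node → Node
  | .b, .u4 => .u2
  | _, v => v

theorem exists_child_iff_of_view_eq : ∀ g u v, view g u = view g v →
    ((∃ w, parent w = some u) ↔ (∃ w, parent w = some v)) := by
  decide

def mech : IMech Node Agent (Fin 3) where
  finV := inferInstance
  E := Edge
  root := .root
  root_no_parent _ h := nomatch h
  unique_parent _ _ _ h h' := Option.some_injective _ (h.symm.trans h')
  reach := reachable
  Δ _ _ := Set.univ
  Δ_nonempty _ _ _ := Set.univ_nonempty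
  τ := move
  τ_child v δ hv _ := parent_move v δ hv
  lab := label
  sim g u v := view g u = view g v
  sim_equiv _ := ⟨fun _ => rfl, Eq.symm, Eq.trans⟩
  sim_decision := exists_child_iff_of_view_eq
  sim_Δ _ _ _ _ := rfl

def profile (da db : Fin 3) : Agent → Fin 3
  | .a => da
  | .b => db

open IMech

theorem mem_next {g : Agent} {d : Fin 3} {v : Node} (δ : Agent → Fin 3) (hδ : δ g = d) :
    move v δ ∈ mech.Next g d v :=
  ⟨δ, fun _ => Set.mem_univ _, hδ, rfl⟩

theorem isLeaf {v : Node} (hv : ∀ u, parent u ≠ some v) : mech.IsLeaf v := hv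

theorem ewin_leaf {g : Agent} {v : Node} (hv : ∀ u, parent u ≠ some v) :
    mech.EWin g (label v) v :=
  .leaf v hv rfl

theorem ewin_of_forced {g : Agent} {o : Outcome} {v w : Node} (d : Fin 3) (hw : mech.EWin g o w)
    (hvw : Edge v w) (hcl : ∀ u, view g v = view g u → u = v)
    (hmove : ∀ δ : Agent → Fin 3, δ g = d → move v δ = w) : mech.EWin g o v :=
  ewin_of_next ⟨w, hvw⟩ (Set.mem_univ d) hcl <| by
    rintro _ ⟨δ, -, hδ, rfl⟩
    rwa [show mech.τ v δ = w from hmove δ hδ]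

theorem epistemicDictator_b_u5 : mech.EpistemicDictator .b .u5 :=
  ⟨ewin_of_forced 0 (ewin_leaf (v := .y5) (by decide)) rfl (by decide) (by decide),
    ewin_of_forced 1 (ewin_leaf (v := .n5) (by decide)) rfl (by decide) (by decide)⟩

theorem epistemicDictator_a_u6 : mech.EpistemicDictator .a .u6 :=
  ⟨ewin_of_forced 0 (ewin_leaf (v := .y6) (by decide)) rfl (by decide) (by decide),
    ewin_of_forced 1 (ewin_leaf (v := .n6) (by decide)) rfl (by decide) (by decide)⟩

theorem ewin_b_no_u4 : mech.EWin .b .no .u4 :=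
  ewin_of_forall_child ⟨.n4, rfl⟩ fun w hw =>
    (by decide : ∀ w, parent w = some .u4 → w = .n4) w hw ▸ ewin_leaf (v := .n4) (by decide)

theorem epistemicDictator_b_u3 : mech.EpistemicDictator .b .u3 :=
  ⟨ewin_of_forced 0 (ewin_leaf (v := .y3) (by decide)) rfl (by decide) (by decide),
    ewin_of_forced 1 ewin_b_no_u4 rfl (by decide) (by decide)⟩

theorem ewin_b_no_u2 : mech.EWin .b .no .u2 := by
  refine .known (M := mech) .u2 0 ⟨.y2, rfl⟩ (Set.mem_univ _) ?_
  rintro _ ⟨u, hu, δ, -, hδ, rfl⟩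
  obtain rfl | rfl := (by decide : ∀ u, view .b .u2 = view .b u → u = .u2 ∨ u = .u4) u hu
  · have hmove : ∀ δ : Agent → Fin 3, δ .b = 0 → move .u2 δ = .u5 := by decide
    rw [show mech.τ .u2 δ = .u5 from hmove δ hδ]
    exact epistemicDictator_b_u5.2
  · exact ewin_leaf (v := .n4) (by decide)

theorem ewin_b_no_root : mech.EWin .b .no .root :=
  ewin_of_forall_child ⟨.u2, rfl⟩ fun w hw => by
    obtain rfl | rfl := (by decide : ∀ w, parent w = some .root → w = .u2 ∨ w = .u3) w hw
    exacts [ewin_b_no_u2, epistemicDictator_b_u3.2]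

theorem not_ewin_b_yes_u6 : ¬ mech.EWin .b .yes .u6 :=
  fun h => nomatch eq_of_ewin_of_ewin (by decide) epistemicDictator_a_u6.2 h

theorem not_ewin_b_yes_u2 : ¬ mech.EWin .b .yes .u2 :=
  not_ewin_of_forall_exists ⟨.y2, rfl⟩
    (fun d _ => ⟨.n4, ⟨.u4, rfl, mem_next (profile 0 d) rfl⟩,
      not_ewin_of_isLeaf (v := .n4) (isLeaf (by decide)) (by decide)⟩)
    ⟨2, Set.mem_univ _, .u6, mem_next (profile 0 2) rfl, not_ewin_b_yes_u6⟩

theorem not_ewin_b_yes_root : ¬ mech.EWin .b .yes .root :=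
  not_ewin_of_forall_exists_next ⟨.u2, rfl⟩ fun d _ =>
    ⟨.u2, mem_next (profile 0 d) rfl, not_ewin_b_yes_u2⟩

theorem epistemicGapFree : mech.EpistemicGapFree := by
  intro v hv
  cases v with
  | root => exact (hv .u2 rfl).elim
  | u2 => exact (hv .y2 rfl).elim
  | u3 => exact (hv .y3 rfl).elim
  | u4 => exact (hv .n4 rfl).elim
  | u5 => exact (hv .y5 rfl).elim
  | u6 => exact (hv .y6 rfl).elim
  | y2 => exact ⟨.b, epistemicallyResponsible_of_transGen (.single rfl) ewin_b_no_u2⟩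
  | y3 => exact ⟨.b, epistemicallyResponsible_of_transGen (.single rfl) epistemicDictator_b_u3.2⟩
  | n4 =>
    exact ⟨.b, epistemicallyResponsible_of_transGen (.tail (.single (rfl : Edge .u3 .u4)) rfl)
      epistemicDictator_b_u3.1⟩
  | y5 => exact ⟨.b, epistemicallyResponsible_of_transGen (.single rfl) epistemicDictator_b_u5.2⟩
  | n5 => exact ⟨.b, epistemicallyResponsible_of_transGen (.single rfl) epistemicDictator_b_u5.1⟩
  | y6 => exact ⟨.a, epistemicallyResponsible_of_transGen (.single rfl) epistemicDictator_a_u6.2⟩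
  | n6 => exact ⟨.a, epistemicallyResponsible_of_transGen (.single rfl) epistemicDictator_a_u6.1⟩

theorem not_electedEpistemicDictatorship : ¬ mech.ElectedEpistemicDictatorship := by
  intro h
  obtain ⟨u, hu, g, hg⟩ :=
    h [.root, .u2, .y2] .y2 ⟨rfl, .cons_cons rfl (.cons_cons rfl (.singleton _))⟩ rfl
      (isLeaf (by decide))
  simp only [List.mem_cons, List.not_mem_nil, or_false] at hu
  obtain rfl | rfl | rfl := hu
  · exact not_epistemicDictator ewin_b_no_root not_ewin_b_yes_root g hg
  · exact not_epistemicDictator ewin_b_no_u2 not_ewin_b_yes_u2 g hg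
  · exact not_ewin_of_isLeaf (v := .y2) (isLeaf (by decide)) (by decide) hg.2

end Counterexample

theorem stmt17 :
    ∃ (V A Act : Type) (M : IMech V A Act),
      M.EpistemicGapFree ∧ ¬ M.ElectedEpistemicDictatorship :=
  ⟨_, _, _, Counterexample.mech, Counterexample.epistemicGapFree,
    Counterexample.not_electedEpistemicDictatorship⟩
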